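/- arXiv:2311.07173 — 2 statements merged into one kernel-verified Lean document; each statement's English description precedes it below -/
import Mathlib

section
/- Define u : ℝ³ → ℝ³ by u(x₁,x₂,x₃) = (x₁, x₂, −2x₃) and P : ℝ³ → ℝ by P(x) = −|u(x)|²/2 = −(x₁² + x₂² + 4x₃²)/2. Then u is smooth, belongs to L²_loc(ℝ³; ℝ³), is not identically zero, and the pair (u, P) satisfies the stationary Navier–Stokes equations pointwise on ℝ³: Δu − (u·∇)u − ∇P = 0 and div u = 0. Hence the trivial solution is not the unique L²_loc solution of the stationary Navier–Stokes equations. -/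
open MeasureTheory Filter Metric
open scoped ENNReal Topology NNReal

noncomputable section

/-- `ℝ³` as a Euclidean space (coordinates `x 0, x 1, x 2` standing for `x₁, x₂, x₃`). -/
abbrev E3 : Type := EuclideanSpace ℝ (Fin 3)

/-- Partial derivative `∂ᵢ g` of a scalar function on `ℝ³`. -/
def pd (i : Fin 3) (g : E3 → ℝ) (x : E3) : ℝ :=
  fderiv ℝ g x (EuclideanSpace.single i 1)

/-- Laplacian of a scalar function on `ℝ³`. -/
def lap3 (g : E3 → ℝ) (x : E3) : ℝ := ∑ i : Fin 3, pd i (pd i g) x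

/-- The modular `ρ_{p(·)}(f) = ∫ |f|^{p(x)} dx` for a finite real-valued variable exponent. -/
def modularV (p : E3 → ℝ) (f : E3 → ℝ) : ℝ≥0∞ :=
  ∫⁻ x, ENNReal.ofReal (|f x| ^ p x)

/-- Membership in the variable exponent Lebesgue space `L^{p(·)}(ℝ³)`
(finiteness of the Luxemburg norm). -/
def MemVarLp (p : E3 → ℝ) (f : E3 → ℝ) : Prop :=
  ∃ l : ℝ, 0 < l ∧ modularV p (fun x => f x / l) ≤ 1

/-- The Luxemburg norm `‖f‖_{L^{p(·)}(ℝ³)}`. -/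
def varLpNorm (p : E3 → ℝ) (f : E3 → ℝ) : ℝ :=
  sInf {l : ℝ | 0 < l ∧ modularV p (fun x => f x / l) ≤ 1}

/-- `(u, P)` is a weak solution of the stationary Navier–Stokes equations
`Δu − (u·∇)u − ∇P = 0`, `div u = 0` on `ℝ³`. -/
def IsWeakSolutionNS (u : E3 → E3) (P : E3 → ℝ) : Prop :=
  (∀ φ : E3 → E3, ContDiff ℝ (⊤ : ℕ∞) φ → HasCompactSupport φ →
      ((∫ x, ∑ j : Fin 3, u x j * lap3 (fun y => φ y j) x) +
        (∑ i : Fin 3, ∑ j : Fin 3, ∫ x, u x i * u x j * pd i (fun y => φ y j) x) +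
        (∫ x, P x * ∑ j : Fin 3, pd j (fun y => φ y j) x) = 0)) ∧
  (∀ ψ : E3 → ℝ, ContDiff ℝ (⊤ : ℕ∞) ψ → HasCompactSupport ψ →
      (∫ x, ∑ j : Fin 3, u x j * pd j ψ x) = 0)

/-- The infinite cylinder `𝒞 = {x ∈ ℝ³ : x₂² + x₃² ≤ 1}`. -/
def cylC : Set E3 := {x | (x 1) ^ 2 + (x 2) ^ 2 ≤ 1}


/-- The velocity field `u(x₁,x₂,x₃) = (x₁, x₂, −2x₃)`. -/
def uEx : E3 → E3 := fun x => WithLp.toLp 2 ![x 0, x 1, -2 * x 2]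

/-- The pressure `P(x) = −|u(x)|²/2 = −(x₁² + x₂² + 4x₃²)/2`. -/
def PEx : E3 → ℝ := fun x => -((x 0) ^ 2 + (x 1) ^ 2 + 4 * (x 2) ^ 2) / 2


lemma pd_coord (j k : Fin 3) (x : E3) :
    pd j (fun y : E3 => y k) x = if k = j then 1 else 0 := by
  have h : (fun y : E3 => y k) = fun y => EuclideanSpace.proj (𝕜 := ℝ) k y := rfl
  rw [pd, h, (EuclideanSpace.proj (𝕜 := ℝ) k).fderiv]
  simp [EuclideanSpace.single_apply]

lemma pd_mul_coord (c : ℝ) (j k : Fin 3) (x : E3) :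
    pd j (fun y : E3 => c * y k) x = c * (if k = j then 1 else 0) := by
  have hd : DifferentiableAt ℝ (fun y : E3 => y k) x :=
    (EuclideanSpace.proj (𝕜 := ℝ) k).differentiableAt
  rw [pd, fderiv_const_mul hd]
  have h2 := pd_coord j k x
  simp only [pd] at h2
  simp [h2]

lemma pd_const (i : Fin 3) (c : ℝ) (x : E3) : pd i (fun _ : E3 => c) x = 0 := by
  simp [pd]

lemma lap3_coord (k : Fin 3) (x : E3) : lap3 (fun y : E3 => y k) x = 0 := by
  unfold lap3
  refine Finset.sum_eq_zero fun j _ => ?_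
  have h : (pd j fun y : E3 => y k) = fun _ : E3 => (if k = j then (1:ℝ) else 0) :=
    funext fun z => pd_coord j k z
  rw [h, pd_const]

lemma lap3_mul_coord (c : ℝ) (k : Fin 3) (x : E3) :
    lap3 (fun y : E3 => c * y k) x = 0 := by
  unfold lap3
  refine Finset.sum_eq_zero fun j _ => ?_
  have h : (pd j fun y : E3 => c * y k) = fun _ : E3 => c * (if k = j then (1:ℝ) else 0) :=
    funext fun z => pd_mul_coord c j k z
  rw [h, pd_const]

lemma pd_PEx (i : Fin 3) (x : E3) :
    pd i PEx x = -(x 0 * (if (0:Fin 3) = i then 1 else 0)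
      + x 1 * (if (1:Fin 3) = i then 1 else 0)
      + 4 * x 2 * (if (2:Fin 3) = i then 1 else 0)) := by
  have h0 : HasFDerivAt (fun y : E3 => y 0) (EuclideanSpace.proj (𝕜 := ℝ) (0:Fin 3)) x :=
    (EuclideanSpace.proj (𝕜 := ℝ) (0:Fin 3)).hasFDerivAt
  have h1 : HasFDerivAt (fun y : E3 => y 1) (EuclideanSpace.proj (𝕜 := ℝ) (1:Fin 3)) x :=
    (EuclideanSpace.proj (𝕜 := ℝ) (1:Fin 3)).hasFDerivAt
  have h2 : HasFDerivAt (fun y : E3 => y 2) (EuclideanSpace.proj (𝕜 := ℝ) (2:Fin 3)) x :=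
    (EuclideanSpace.proj (𝕜 := ℝ) (2:Fin 3)).hasFDerivAt
  have H := ((((h0.mul h0).add (h1.mul h1)).add ((h2.mul h2).const_mul 4)).neg.mul_const
    ((2:ℝ)⁻¹))
  have hfun : PEx = fun y : E3 => -(y 0 * y 0 + y 1 * y 1 + 4 * (y 2 * y 2)) * (2:ℝ)⁻¹ := by
    funext y; simp [PEx]; ring
  rw [pd, hfun, (show HasFDerivAt (fun y : E3 => -(y 0 * y 0 + y 1 * y 1 + 4 * (y 2 * y 2)) * (2:ℝ)⁻¹) _ x from H).fderiv]
  simp [EuclideanSpace.single_apply]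
  fin_cases i <;> norm_num [Fin.ext_iff] <;> ring

lemma uEx_apply0 : (fun y : E3 => uEx y 0) = fun y : E3 => y 0 := rfl
lemma uEx_apply1 : (fun y : E3 => uEx y 1) = fun y : E3 => y 1 := rfl
lemma uEx_apply2 : (fun y : E3 => uEx y 2) = fun y : E3 => (-2 : ℝ) * y 2 := rfl

lemma uEx_contDiff : ContDiff ℝ (⊤ : ℕ∞) uEx := by
  apply contDiff_euclidean.mpr
  intro i
  fin_cases i
  · exact (EuclideanSpace.proj (𝕜 := ℝ) (0:Fin 3)).contDiff
  · exact (EuclideanSpace.proj (𝕜 := ℝ) (1:Fin 3)).contDiff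
  · exact contDiff_const.mul (EuclideanSpace.proj (𝕜 := ℝ) (2:Fin 3)).contDiff


/-- The pair `(uEx, PEx)` is a smooth, locally square integrable, nontrivial pointwise
solution of the stationary Navier–Stokes equations: hence the trivial solution is not the
unique `L²_loc` solution. -/
theorem nontrivial_stationary_solution :
    ContDiff ℝ (⊤ : ℕ∞) uEx ∧
      LocallyIntegrable (fun x => ‖uEx x‖ ^ 2) volume ∧
      uEx ≠ 0 ∧
      (∀ x : E3, ∀ i : Fin 3,
        lap3 (fun y => uEx y i) x - (∑ j : Fin 3, uEx x j * pd j (fun y => uEx y i) x) -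
            pd i PEx x = 0) ∧
      (∀ x : E3, ∑ j : Fin 3, pd j (fun y => uEx y j) x = 0) :=  by
  refine ⟨uEx_contDiff, ?_, ?_, ?_, ?_⟩
  · exact ((uEx_contDiff.continuous.norm).pow 2).locallyIntegrable
  · intro h
    have h1 : uEx (EuclideanSpace.single 0 1) 0 = 0 := by rw [h]; rfl
    have h2 : uEx (EuclideanSpace.single 0 1) 0 = 1 := by
      simp [uEx, EuclideanSpace.single_apply]
    rw [h2] at h1
    exact one_ne_zero h1
  · intro x i
    fin_cases i
    · show lap3 (fun y : E3 => uEx y 0) x -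
        (∑ j : Fin 3, uEx x j * pd j (fun y : E3 => uEx y 0) x) - pd 0 PEx x = 0
      rw [uEx_apply0, lap3_coord, Fin.sum_univ_three, pd_PEx]
      simp only [uEx, Matrix.cons_val_zero, Matrix.cons_val_one, Matrix.head_cons]
      rw [pd_coord, pd_coord, pd_coord]
      norm_num [Fin.ext_iff]
    · show lap3 (fun y : E3 => uEx y 1) x -
        (∑ j : Fin 3, uEx x j * pd j (fun y : E3 => uEx y 1) x) - pd 1 PEx x = 0
      rw [uEx_apply1, lap3_coord, Fin.sum_univ_three, pd_PEx]
      simp only [uEx, Matrix.cons_val_zero, Matrix.cons_val_one, Matrix.head_cons]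
      rw [pd_coord, pd_coord, pd_coord]
      norm_num [Fin.ext_iff]
    · show lap3 (fun y : E3 => uEx y 2) x -
        (∑ j : Fin 3, uEx x j * pd j (fun y : E3 => uEx y 2) x) - pd 2 PEx x = 0
      rw [uEx_apply2, lap3_mul_coord, Fin.sum_univ_three, pd_PEx]
      simp only [uEx, Matrix.cons_val_zero, Matrix.cons_val_one, Matrix.head_cons]
      rw [pd_mul_coord, pd_mul_coord, pd_mul_coord]
      norm_num [Fin.ext_iff, Matrix.cons_val_two, Matrix.tail_cons]
      ring
  · intro x
    rw [Fin.sum_univ_three, uEx_apply0, uEx_apply1, uEx_apply2,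
      pd_coord, pd_coord, pd_mul_coord]
    norm_num
end
end

section
/- Let 𝒞 = {(x₁,x₂,x₃) ∈ ℝ³ : x₂² + x₃² ≤ 1} and let q : ℝ³ → [1,∞) be a measurable exponent with 9/5 < ess inf_{ℝ³∖𝒞} q ≤ ess sup_{ℝ³∖𝒞} q < 3 and 1 < ess inf_𝒞 q ≤ ess sup_𝒞 q < 9/5. Let θ ∈ C_c^∞(ℝ³) with 0 ≤ θ ≤ 1, θ(x) = 1 for |x| ≤ 1 and θ(x) = 0 for |x| ≥ 2, and for R > 1 set θ_R(x) = θ(x/R). Then ‖Δθ_R‖_{L^{q(·)}(ℝ³)} → 0 as R → ∞. -/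
open MeasureTheory Filter Metric
open scoped ENNReal Topology NNReal

noncomputable section

-- coordinate bound
lemma coord_abs_le_norm (x : E3) (i : Fin 3) : |x i| ≤ ‖x‖ := by
  rw [EuclideanSpace.norm_eq]
  rw [← Real.sqrt_sq_eq_abs]
  apply Real.sqrt_le_sqrt
  have : |x i| ^ 2 ≤ ∑ j : Fin 3, ‖x j‖ ^ 2 :=
    Finset.single_le_sum (f := fun j => ‖x j‖ ^ 2) (fun j _ => by positivity) (Finset.mem_univ i)
  simpa [Real.norm_eq_abs, sq_abs] using this

-- smoothness of pd
lemma pd_contDiff {g : E3 → ℝ} (hg : ContDiff ℝ (⊤ : ℕ∞) g) (i : Fin 3) : ContDiff ℝ (⊤ : ℕ∞) (pd i g) :=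
  (hg.fderiv_right (by simp)).clm_apply contDiff_const

lemma pd_smul {g : E3 → ℝ} (hg : ContDiff ℝ (⊤ : ℕ∞) g) (c : ℝ) (i : Fin 3) (x : E3) :
    pd i (fun y => g (c • y)) x = c * pd i g (c • x) := by
  set L : E3 →L[ℝ] E3 := c • ContinuousLinearMap.id ℝ E3 with hL
  have hLy : ∀ y, L y = c • y := fun y => rfl
  have hcomp : (fun y => g (c • y)) = g ∘ ⇑L := by funext y; simp [hLy]
  unfold pd
  rw [hcomp, fderiv_comp x ((hg.differentiable (by simp)).differentiableAt) (L.differentiableAt),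
    L.fderiv]
  simp [hLy, _root_.map_smul, smul_eq_mul]

lemma lap3_smul {g : E3 → ℝ} (hg : ContDiff ℝ (⊤ : ℕ∞) g) (c : ℝ) (x : E3) :
    lap3 (fun y => g (c • y)) x = c ^ 2 * lap3 g (c • x) := by
  unfold lap3
  rw [Finset.mul_sum]
  refine Finset.sum_congr rfl fun i _ => ?_
  have h1 : pd i (fun y => g (c • y)) = fun z => c * pd i g (c • z) := by
    funext z; exact pd_smul hg c i z
  rw [h1]
  have hdiff : ∀ z : E3, DifferentiableAt ℝ (fun y : E3 => pd i g (c • y)) z := by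
    intro z
    have : ContDiff ℝ (⊤ : ℕ∞) (fun y : E3 => pd i g (c • y)) :=
      (pd_contDiff hg i).comp (contDiff_const_smul c)
    exact (this.differentiable (by simp)).differentiableAt
  have h2 : pd i (fun z => c * pd i g (c • z)) x
      = c * pd i (fun z => pd i g (c • z)) x := by
    show fderiv ℝ (fun z => c * pd i g (c • z)) x (EuclideanSpace.single i 1)
      = c * fderiv ℝ (fun z => pd i g (c • z)) x (EuclideanSpace.single i 1)
    rw [fderiv_const_mul (hdiff x) c]
    simp [smul_eq_mul]
  rw [h2, pd_smul (pd_contDiff hg i) c i x]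
  ring

lemma lap3_zero_on_open {U : Set E3} (hU : IsOpen U) {g : E3 → ℝ}
    (hg0 : ∀ y ∈ U, g y = 0) : ∀ x ∈ U, lap3 g x = 0 := by
  have h1 : ∀ i : Fin 3, ∀ x ∈ U, pd i g x = 0 := by
    intro i x hx
    have he : g =ᶠ[𝓝 x] (fun _ => (0 : ℝ)) :=
      eventually_of_mem (hU.mem_nhds hx) hg0
    show fderiv ℝ g x (EuclideanSpace.single i 1) = 0
    rw [he.fderiv_eq]
    simp
  intro x hx
  unfold lap3
  refine Finset.sum_eq_zero fun i _ => ?_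
  have he : pd i g =ᶠ[𝓝 x] (fun _ => (0 : ℝ)) :=
    eventually_of_mem (hU.mem_nhds hx) (h1 i)
  show fderiv ℝ (pd i g) x (EuclideanSpace.single i 1) = 0
  rw [he.fderiv_eq]
  simp

-- volume of a box in E3
lemma vol_box (a b : Fin 3 → ℝ) :
    volume {x : E3 | ∀ i, x i ∈ Set.Icc (a i) (b i)} = ∏ i, ENNReal.ofReal (b i - a i) := by
  have hmp := EuclideanSpace.volume_preserving_symm_measurableEquiv_toLp (Fin 3)
  have hset : {x : E3 | ∀ i, x i ∈ Set.Icc (a i) (b i)}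
      = (MeasurableEquiv.toLp 2 (Fin 3 → ℝ)).symm ⁻¹' (Set.univ.pi fun i => Set.Icc (a i) (b i)) := by
    ext x
    simp [Set.mem_univ_pi, Pi.le_def, forall_and]
  rw [hset, hmp.measure_preimage
    ((MeasurableSet.univ_pi fun i => measurableSet_Icc).nullMeasurableSet),
    volume_pi_pi]
  simp [Real.volume_Icc]

lemma cylC_measurable : MeasurableSet cylC := by
  have hcont : Continuous fun x : E3 => (x 1) ^ 2 + (x 2) ^ 2 := by
    have h1 : Continuous fun x : E3 => x 1 := (EuclideanSpace.proj (1 : Fin 3)).continuous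
    have h2 : Continuous fun x : E3 => x 2 := (EuclideanSpace.proj (2 : Fin 3)).continuous
    exact (h1.pow 2).add (h2.pow 2)
  exact (isClosed_le hcont continuous_const).measurableSet

lemma region_bound (q : E3 → ℝ) (hq1 : ∀ x, 1 ≤ q x) {s : Set E3} {e : ℝ} (he : 0 ≤ e)
    (hqe : ∀ᵐ x ∂(volume.restrict s), e ≤ q x)
    {f : E3 → ℝ} {b R : ℝ} (hb0 : 0 < b) (hb1 : b ≤ 1)
    (hfb : ∀ x, |f x| ≤ b) (hf0 : ∀ x, 2 * R < ‖x‖ → f x = 0) :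
    ∫⁻ x in s, ENNReal.ofReal (|f x| ^ q x)
      ≤ ENNReal.ofReal (b ^ e) * volume.restrict s (Metric.closedBall (0 : E3) (2 * R)) := by
  have hmono : ∀ᵐ x ∂(volume.restrict s), ENNReal.ofReal (|f x| ^ q x)
      ≤ (Metric.closedBall (0 : E3) (2 * R)).indicator
          (fun _ => ENNReal.ofReal (b ^ e)) x := by
    filter_upwards [hqe] with x hqx
    by_cases hx : x ∈ Metric.closedBall (0 : E3) (2 * R)
    · rw [Set.indicator_of_mem hx]
      apply ENNReal.ofReal_le_ofReal
      calc |f x| ^ q x ≤ b ^ q x :=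
            Real.rpow_le_rpow (abs_nonneg _) (hfb x) (le_trans zero_le_one (hq1 x))
        _ ≤ b ^ e := Real.rpow_le_rpow_of_exponent_ge hb0 hb1 hqx
    · have hfx : f x = 0 := hf0 x (by
        simpa [Metric.mem_closedBall, dist_zero_right, not_le] using hx)
      have : |f x| ^ q x = 0 := by
        rw [hfx, abs_zero, Real.zero_rpow (by linarith [hq1 x] : q x ≠ 0)]
      rw [this]
      simp
  calc ∫⁻ x in s, ENNReal.ofReal (|f x| ^ q x)
      ≤ ∫⁻ x in s, (Metric.closedBall (0 : E3) (2 * R)).indicator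
          (fun _ => ENNReal.ofReal (b ^ e)) x := lintegral_mono_ae hmono
    _ = ENNReal.ofReal (b ^ e) * volume.restrict s (Metric.closedBall (0 : E3) (2 * R)) :=
        lintegral_indicator_const measurableSet_closedBall _

lemma vol_ball_inter_out (R : ℝ) (hR : 0 < R) (s : Set E3) :
    volume.restrict s (Metric.closedBall (0 : E3) (2 * R)) ≤ ENNReal.ofReal (64 * R ^ 3) := by
  calc volume.restrict s (Metric.closedBall (0 : E3) (2 * R))
      ≤ volume (Metric.closedBall (0 : E3) (2 * R)) := Measure.restrict_le_self _
    _ ≤ volume {x : E3 | ∀ i, x i ∈ Set.Icc (-(2 * R)) (2 * R)} := by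
        apply measure_mono
        intro x hx i
        have h1 : ‖x‖ ≤ 2 * R := by
          simpa [Metric.mem_closedBall, dist_zero_right] using hx
        have h2 := coord_abs_le_norm x i
        constructor <;> [linarith [abs_le.1 (le_trans h2 h1) |>.1];
          linarith [abs_le.1 (le_trans h2 h1) |>.2]]
    _ = ∏ i : Fin 3, ENNReal.ofReal (2 * R - -(2 * R)) :=
        vol_box (fun _ => -(2 * R)) (fun _ => 2 * R)
    _ = ENNReal.ofReal (64 * R ^ 3) := by
        have h4 : 2 * R - -(2 * R) = 4 * R := by ring
        rw [h4, Fin.prod_univ_three, ← ENNReal.ofReal_mul (by positivity),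
          ← ENNReal.ofReal_mul (by positivity)]
        congr 1
        ring

lemma vol_ball_inter_cyl (R : ℝ) (hR : 0 < R) :
    volume.restrict cylC (Metric.closedBall (0 : E3) (2 * R)) ≤ ENNReal.ofReal (16 * R) := by
  rw [Measure.restrict_apply measurableSet_closedBall]
  calc volume (Metric.closedBall (0 : E3) (2 * R) ∩ cylC)
      ≤ volume {x : E3 | ∀ i, x i ∈ Set.Icc ((![-(2 * R), -1, -1]) i) ((![2 * R, 1, 1]) i)} := by
        apply measure_mono
        rintro x ⟨hx1, hx2⟩ i
        have h1 : ‖x‖ ≤ 2 * R := by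
          simpa [Metric.mem_closedBall, dist_zero_right] using hx1
        have hcyl : (x 1) ^ 2 + (x 2) ^ 2 ≤ 1 := hx2
        fin_cases i
        · have h2 := coord_abs_le_norm x 0
          show -(2 * R) ≤ x 0 ∧ x 0 ≤ 2 * R
          constructor <;> [linarith [abs_le.1 (le_trans h2 h1) |>.1];
            linarith [abs_le.1 (le_trans h2 h1) |>.2]]
        · show (-1 : ℝ) ≤ x 1 ∧ x 1 ≤ 1
          constructor <;> nlinarith [sq_nonneg (x 2)]
        · show (-1 : ℝ) ≤ x 2 ∧ x 2 ≤ 1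
          constructor <;> nlinarith [sq_nonneg (x 1)]
    _ = ENNReal.ofReal (16 * R) := by
        rw [vol_box, Fin.prod_univ_three]
        simp only [Matrix.cons_val_zero, Matrix.cons_val_one, Matrix.head_cons,
          Matrix.cons_val_two, Matrix.tail_cons]
        have h4 : 2 * R - -(2 * R) = 4 * R := by ring
        have h5 : (1 : ℝ) - -1 = 2 := by ring
        rw [h4, h5, ← ENNReal.ofReal_mul (by positivity), ← ENNReal.ofReal_mul (by positivity)]
        congr 1
        ring

lemma modular_eventually (q : E3 → ℝ) (hq1 : ∀ x, 1 ≤ q x)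
    (hout : ∀ᵐ x ∂(volume.restrict cylCᶜ), (9 / 5 : ℝ) ≤ q x)
    (θ : E3 → ℝ) (hθsmooth : ContDiff ℝ (⊤ : ℕ∞) θ) (hθout : ∀ x : E3, 2 ≤ ‖x‖ → θ x = 0)
    (ε : ℝ) (hε : 0 < ε) :
    ∀ᶠ R : ℝ in atTop, modularV q (fun x => lap3 (fun y => θ (R⁻¹ • y)) x / ε) ≤ 1 := by
  -- the Laplacian of θ vanishes far away and is bounded
  have hU : IsOpen {y : E3 | 2 < ‖y‖} := isOpen_lt continuous_const continuous_norm
  have hlapθ0 : ∀ y : E3, 2 < ‖y‖ → lap3 θ y = 0 := fun y hy =>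
    lap3_zero_on_open hU (fun z hz => hθout z (le_of_lt hz)) y hy
  have hcs : HasCompactSupport (lap3 θ) :=
    HasCompactSupport.intro (isCompact_closedBall (0 : E3) 2) (fun x hx =>
      hlapθ0 x (by simpa [Metric.mem_closedBall, dist_zero_right, not_le] using hx))
  have hcont : Continuous (lap3 θ) := by
    unfold lap3
    exact continuous_finset_sum _ fun i _ => (pd_contDiff (pd_contDiff hθsmooth i) i).continuous
  obtain ⟨C, hC⟩ := hcs.exists_bound_of_continuous hcont
  set M : ℝ := max C 1 with hMdef
  have hM0 : 0 < M := lt_of_lt_of_le one_pos (le_max_right _ _)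
  have hMb : ∀ y, |lap3 θ y| ≤ M := fun y =>
    le_trans (by simpa [Real.norm_eq_abs] using hC y) (le_max_left _ _)
  set K : ℝ := M / ε with hKdef
  have hK : 0 < K := div_pos hM0 hε
  have hg : Tendsto (fun R : ℝ =>
      64 * K ^ ((9 : ℝ) / 5) * R ^ (-((3 : ℝ) / 5)) + 16 * K * R⁻¹) atTop (𝓝 0) := by
    have t1 := (tendsto_rpow_neg_atTop (by norm_num : (0 : ℝ) < 3 / 5)).const_mul
      (64 * K ^ ((9 : ℝ) / 5))
    have t2 := tendsto_inv_atTop_zero.const_mul (16 * K)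
    simpa using t1.add t2
  filter_upwards [eventually_ge_atTop 1, eventually_ge_atTop K,
    hg.eventually_le_const zero_lt_one] with R hR1 hRK hgR
  have hR0 : (0 : ℝ) < R := lt_of_lt_of_le one_pos hR1
  set b : ℝ := K / R ^ 2 with hbdef
  have hb0 : 0 < b := div_pos hK (by positivity)
  have hb1 : b ≤ 1 := by
    rw [hbdef, div_le_one (by positivity)]
    nlinarith
  have hlap : ∀ x : E3, lap3 (fun y => θ (R⁻¹ • y)) x = (R⁻¹) ^ 2 * lap3 θ (R⁻¹ • x) :=
    fun x => lap3_smul hθsmooth R⁻¹ x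
  have hfb : ∀ x : E3, |lap3 (fun y => θ (R⁻¹ • y)) x / ε| ≤ b := by
    intro x
    rw [hlap x]
    calc |(R⁻¹) ^ 2 * lap3 θ (R⁻¹ • x) / ε|
        = (R⁻¹) ^ 2 * |lap3 θ (R⁻¹ • x)| / ε := by
          rw [abs_div, abs_mul, abs_of_nonneg (by positivity : (0 : ℝ) ≤ (R⁻¹) ^ 2),
            abs_of_pos hε]
      _ ≤ (R⁻¹) ^ 2 * M / ε := by gcongr; exact hMb _
      _ = b := by rw [hbdef, hKdef]; field_simp
  have hf0 : ∀ x : E3, 2 * R < ‖x‖ → lap3 (fun y => θ (R⁻¹ • y)) x / ε = 0 := by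
    intro x hx
    rw [hlap x]
    have hn : 2 < ‖R⁻¹ • x‖ := by
      rw [norm_smul, Real.norm_eq_abs, abs_of_pos (inv_pos.2 hR0)]
      have := (mul_lt_mul_iff_right₀ (inv_pos.2 hR0)).2 hx
      calc (2 : ℝ) = R⁻¹ * (2 * R) := by field_simp
        _ < R⁻¹ * ‖x‖ := this
    rw [hlapθ0 _ hn]
    simp
  have hin := region_bound q hq1 zero_le_one
    (Filter.Eventually.of_forall fun x => hq1 x :
      ∀ᵐ x ∂(volume.restrict cylC), (1 : ℝ) ≤ q x) hb0 hb1 hfb hf0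
  have hout' := region_bound q hq1 (by norm_num : (0 : ℝ) ≤ 9 / 5) hout hb0 hb1 hfb hf0
  have halg : b ^ (1 : ℝ) * (16 * R) + b ^ ((9 : ℝ) / 5) * (64 * R ^ 3)
      = 16 * K * R⁻¹ + 64 * K ^ ((9 : ℝ) / 5) * R ^ (-((3 : ℝ) / 5)) := by
    rw [Real.rpow_one]
    have e1 : b * (16 * R) = 16 * K * R⁻¹ := by
      rw [hbdef]; field_simp
    have h18 : ((R ^ 2 : ℝ)) ^ ((9 : ℝ) / 5) = R ^ ((18 : ℝ) / 5) := by
      rw [← Real.rpow_natCast R 2, ← Real.rpow_mul hR0.le]; norm_num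
    have h3 : (R : ℝ) ^ (3 : ℕ) = R ^ ((3 : ℝ)) := by
      rw [show ((3 : ℝ)) = ((3 : ℕ) : ℝ) by norm_num, Real.rpow_natCast]
    have h4 : R ^ ((3 : ℝ)) / R ^ ((18 : ℝ) / 5) = R ^ (-((3 : ℝ) / 5)) := by
      rw [← Real.rpow_sub hR0]; norm_num
    have e2 : b ^ ((9 : ℝ) / 5) * (64 * R ^ 3) = 64 * K ^ ((9 : ℝ) / 5) * R ^ (-((3 : ℝ) / 5)) := by
      rw [hbdef, Real.div_rpow hK.le (by positivity), h18, h3, ← h4]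
      ring
    rw [e1, e2]
  calc modularV q (fun x => lap3 (fun y => θ (R⁻¹ • y)) x / ε)
      = (∫⁻ x in cylC, ENNReal.ofReal (|lap3 (fun y => θ (R⁻¹ • y)) x / ε| ^ q x))
        + ∫⁻ x in cylCᶜ, ENNReal.ofReal (|lap3 (fun y => θ (R⁻¹ • y)) x / ε| ^ q x) :=
        (lintegral_add_compl
          (fun x => ENNReal.ofReal (|lap3 (fun y => θ (R⁻¹ • y)) x / ε| ^ q x))
          cylC_measurable).symm
    _ ≤ ENNReal.ofReal (b ^ (1 : ℝ)) * ENNReal.ofReal (16 * R)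
        + ENNReal.ofReal (b ^ ((9 : ℝ) / 5)) * ENNReal.ofReal (64 * R ^ 3) :=
        add_le_add
          (le_trans hin (mul_le_mul_right (vol_ball_inter_cyl R hR0) _))
          (le_trans hout' (mul_le_mul_right (vol_ball_inter_out R hR0 _) _))
    _ = ENNReal.ofReal (b ^ (1 : ℝ) * (16 * R) + b ^ ((9 : ℝ) / 5) * (64 * R ^ 3)) := by
        rw [← ENNReal.ofReal_mul (by positivity), ← ENNReal.ofReal_mul (by positivity),
          ← ENNReal.ofReal_add (by positivity) (by positivity)]
    _ ≤ 1 := by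
        rw [halg, ← ENNReal.ofReal_one]
        exact ENNReal.ofReal_le_ofReal (by linarith)

/-- Decay of `‖Δθ_R‖_{L^{q(·)}(ℝ³)}` as `R → ∞` for the conjugate-type exponent `q`
adapted to the cylinder `𝒞`. -/
theorem laplacian_cutoff_norm_tendsto_zero_cylinder
    (q : E3 → ℝ) (hqmeas : Measurable q) (hq1 : ∀ x, 1 ≤ q x)
    (hout_lb : (9 / 5 : ℝ) < essInf q (volume.restrict cylCᶜ))
    (hout_le : essInf q (volume.restrict cylCᶜ) ≤ essSup q (volume.restrict cylCᶜ))
    (hout_ub : essSup q (volume.restrict cylCᶜ) < 3)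
    (hin_lb : (1 : ℝ) < essInf q (volume.restrict cylC))
    (hin_le : essInf q (volume.restrict cylC) ≤ essSup q (volume.restrict cylC))
    (hin_ub : essSup q (volume.restrict cylC) < 9 / 5)
    (θ : E3 → ℝ) (hθsmooth : ContDiff ℝ (⊤ : ℕ∞) θ) (hθsupp : HasCompactSupport θ)
    (hθ0 : ∀ x, 0 ≤ θ x) (hθ1 : ∀ x, θ x ≤ 1)
    (hθin : ∀ x : E3, ‖x‖ ≤ 1 → θ x = 1) (hθout : ∀ x : E3, 2 ≤ ‖x‖ → θ x = 0) :
    Tendsto (fun R : ℝ => varLpNorm q (fun x => lap3 (fun y => θ (R⁻¹ • y)) x))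
      atTop (𝓝 0) := by
  have hout_ae : ∀ᵐ x ∂(volume.restrict cylCᶜ), (9 / 5 : ℝ) ≤ q x := by
    have hb : IsBoundedUnder (· ≥ ·) (ae (volume.restrict cylCᶜ)) q :=
      Filter.isBoundedUnder_of ⟨1, fun x => hq1 x⟩
    filter_upwards [ae_essInf_le hb] with x hx
    linarith
  rw [Metric.tendsto_nhds]
  intro ε hε
  filter_upwards [modular_eventually q hq1 hout_ae θ hθsmooth hθout (ε / 2)
    (half_pos hε)] with R hR
  have h0 : 0 ≤ varLpNorm q (fun x => lap3 (fun y => θ (R⁻¹ • y)) x) :=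
    Real.sInf_nonneg (fun l hl => le_of_lt hl.1)
  rw [Real.dist_0_eq_abs, abs_of_nonneg h0]
  have hle : varLpNorm q (fun x => lap3 (fun y => θ (R⁻¹ • y)) x) ≤ ε / 2 :=
    csInf_le ⟨0, fun l hl => le_of_lt hl.1⟩ ⟨half_pos hε, hR⟩
  linarith
end
end
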